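/- For all sufficiently large n and every q with q ≤ n²/20, there exists a graph H on n vertices with ⌊n²/4⌋ + 1 + q edges whose number of bowtie subgraphs is at most (q+1)²·(13n/4 + 13). Consequently h_F(n,q) ≤ (q+1)²(13n/4 + 13). -/

import Mathlib

open Finset

/-- A bowtie in `G` with centre `c` and triangles `c a b`, `c d e`. -/
def IsBowtie {V : Type*} (G : SimpleGraph V) (c a b d e : V) : Prop :=
  G.Adj c a ∧ G.Adj c b ∧ G.Adj a b ∧ G.Adj c d ∧ G.Adj c e ∧ G.Adj d e ∧
  a ≠ d ∧ a ≠ e ∧ b ≠ d ∧ b ≠ e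

/-- The number of bowtie subgraphs of `G`: each bowtie subgraph corresponds to
exactly 8 ordered tuples `(c,a,b,d,e)`. -/
noncomputable def bowtieCount {V : Type*} (G : SimpleGraph V) : ℕ :=
  Nat.card {t : V × V × V × V × V //
    IsBowtie G t.1 t.2.1 t.2.2.1 t.2.2.2.1 t.2.2.2.2} / 8

/-- The edge set of the bowtie on `(c,a,b,d,e)`. -/
def btEdges {V : Type*} (c a b d e : V) : Set (Sym2 V) :=
  {s(c,a), s(c,b), s(a,b), s(c,d), s(c,e), s(d,e)}

/-- The number of bowtie subgraphs of `G` containing both edges `f₁` and `f₂`. -/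
noncomputable def bowtieCountThru2 {V : Type*} (G : SimpleGraph V) (f₁ f₂ : Sym2 V) : ℕ :=
  Nat.card {t : V × V × V × V × V //
    IsBowtie G t.1 t.2.1 t.2.2.1 t.2.2.2.1 t.2.2.2.2 ∧
    f₁ ∈ btEdges t.1 t.2.1 t.2.2.1 t.2.2.2.1 t.2.2.2.2 ∧
    f₂ ∈ btEdges t.1 t.2.1 t.2.2.1 t.2.2.2.1 t.2.2.2.2} / 8

/-- The number of bowtie subgraphs of `G` containing the edge `f`. -/
noncomputable def bowtieCountThru1 {V : Type*} (G : SimpleGraph V) (f : Sym2 V) : ℕ :=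
  Nat.card {t : V × V × V × V × V //
    IsBowtie G t.1 t.2.1 t.2.2.1 t.2.2.2.1 t.2.2.2.2 ∧
    f ∈ btEdges t.1 t.2.1 t.2.2.1 t.2.2.2.1 t.2.2.2.2} / 8

/-- The number of edges of `G`. -/
noncomputable def edgeCount {V : Type*} (G : SimpleGraph V) : ℕ := Nat.card G.edgeSet

/-- The degree of `v` in `G`. -/
noncomputable def nbrDeg {V : Type*} (G : SimpleGraph V) (v : V) : ℕ :=
  Nat.card {w // G.Adj v w}

/-- The number of neighbours of `v` lying in the same part of the
partition `{V₁, V₁ᶜ}` as `v` (the "bad degree"). -/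
noncomputable def sameDeg {V : Type*} (G : SimpleGraph V) (V₁ : Finset V) (v : V) : ℕ :=
  Nat.card {w // G.Adj v w ∧ (w ∈ V₁ ↔ v ∈ V₁)}

/-- The number of edges of `G` with both endpoints in `S`. -/
noncomputable def insideEdges {V : Type*} (G : SimpleGraph V) (S : Finset V) : ℕ :=
  Nat.card {e : Sym2 V // e ∈ G.edgeSet ∧ ∀ x ∈ e, x ∈ S}

/-- `hF n q`: the minimum number of bowtie subgraphs over graphs on `n`
vertices with `ex(n,F) + q = ⌊n²/4⌋ + 1 + q` edges. -/
noncomputable def hF (n q : ℕ) : ℕ :=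
  sInf {k | ∃ G : SimpleGraph (Fin n), edgeCount G = n ^ 2 / 4 + 1 + q ∧ bowtieCount G = k}

/-!
Take the complete bipartite graph with parts `P` of size `⌊n/2⌋` and `Pᶜ` of size `⌈n/2⌉`, and
add `k = q + 1` edges inside `P` forming a bipartite graph `J` between two disjoint `m`-sets,
`m = ⌊n/4⌋`, whose degrees are at most `⌈k/m⌉`. As `J` is triangle-free, every triangle is an
edge of `J` plus a vertex on the other side. A bowtie centred in `Pᶜ` is an ordered pair of
oriented `J`-edges, giving at most `|Pᶜ|(2k)²` tuples; a bowtie centred at `c ∈ P` uses two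
distinct `J`-edges at `c` and two vertices of `Pᶜ`, giving at most `4|Pᶜ|² deg c (deg c - 1)`
tuples, and the degree bound turns the sum of these into `8|Pᶜ|² k (k-1)/m`. Dividing by the
`8` orderings of a bowtie gives `(q+1)²(13n/4 + 13)`.
-/

open SimpleGraph

lemma natCard_isBowtie_eq_sum {V : Type*} [Fintype V] (G : SimpleGraph V) :
    Nat.card {t : V × V × V × V × V // IsBowtie G t.1 t.2.1 t.2.2.1 t.2.2.2.1 t.2.2.2.2} =
      ∑ c, Nat.card {p : (V × V) × (V × V) // IsBowtie G c p.1.1 p.1.2 p.2.1 p.2.2} := by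
  rw [← Nat.card_sigma]
  exact Nat.card_congr <| (Equiv.subtypeProdEquivSigmaSubtype
    fun c x => IsBowtie G c x.1 x.2.1 x.2.2.1 x.2.2.2).trans <|
    Equiv.sigmaCongrRight fun _ => (Equiv.prodAssoc V V (V × V)).symm.subtypeEquiv fun _ => Iff.rfl

lemma edgeCount_eq_card_edgeFinset {V : Type*} [Fintype V] (G : SimpleGraph V)
    [DecidableRel G.Adj] : edgeCount G = #G.edgeFinset := by
  rw [edgeCount, Nat.card_eq_fintype_card, edgeFinset_card]

namespace SimpleGraph

lemma degree_map_le_of_forall_degree_le {V W : Type*} [Fintype V] [Fintype W] [DecidableEq W]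
    {G : SimpleGraph V} [DecidableRel G.Adj] (f : V ↪ W) [DecidableRel (G.map f).Adj] {D : ℕ}
    (hD : ∀ v, G.degree v ≤ D) (w : W) : (G.map f).degree w ≤ D := by
  by_cases hw : ∃ v, f v = w
  · obtain ⟨v, rfl⟩ := hw
    have hN : (G.map f).neighborFinset (f v) = (G.neighborFinset v).map f := by
      ext; simp [map_adj, eq_comm]
    rw [← card_neighborFinset_eq_degree, hN, card_map]
    exact hD v
  · simp only [not_exists] at hw
    have hN : (G.map f).neighborFinset w = ∅ := by
      ext; simp [map_adj, hw]
    rw [← card_neighborFinset_eq_degree, hN, card_empty]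
    exact Nat.zero_le D

lemma sum_degree_mul_pred_le {V : Type*} [Fintype V] {G : SimpleGraph V} [DecidableRel G.Adj]
    {D : ℕ} (hD : ∀ v, G.degree v ≤ D + 1) :
    ∑ v, G.degree v * (G.degree v - 1) ≤ 2 * #G.edgeFinset * D := by
  rw [← sum_degrees_eq_twice_card_edges, sum_mul]
  gcongr with v
  exact Nat.sub_le_of_le_add (hD v)

section BipartiteOfRel

variable {α β : Type*} (R : α → β → Prop)

def bipartiteOfRel : SimpleGraph (α ⊕ β) where
  Adj
    | .inl a, .inr b => R a b
    | .inr b, .inl a => R a b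
    | _, _ => False
  symm := ⟨by rintro (a | b) (a' | b') h <;> exact h⟩
  loopless := ⟨by rintro (a | b) h <;> exact h⟩

instance [∀ a b, Decidable (R a b)] : DecidableRel (bipartiteOfRel R).Adj
  | .inl a, .inr b => inferInstanceAs (Decidable (R a b))
  | .inr b, .inl a => inferInstanceAs (Decidable (R a b))
  | .inl _, .inl _ => isFalse id
  | .inr _, .inr _ => isFalse id

variable {R}

@[simp] lemma bipartiteOfRel_adj_inl_inr {a : α} {b : β} :
    (bipartiteOfRel R).Adj (.inl a) (.inr b) ↔ R a b := Iff.rfl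

@[simp] lemma bipartiteOfRel_adj_inr_inl {a : α} {b : β} :
    (bipartiteOfRel R).Adj (.inr b) (.inl a) ↔ R a b := Iff.rfl

@[simp] lemma not_bipartiteOfRel_adj_inl_inl {a a' : α} :
    ¬(bipartiteOfRel R).Adj (.inl a) (.inl a') := id

@[simp] lemma not_bipartiteOfRel_adj_inr_inr {b b' : β} :
    ¬(bipartiteOfRel R).Adj (.inr b) (.inr b') := id

lemma cliqueFree_three_bipartiteOfRel : (bipartiteOfRel R).CliqueFree 3 := by
  have h2 : (bipartiteOfRel R).Colorable 2 :=
    (Coloring.mk Sum.isLeft fun {x y} h => by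
      rcases x with a | b <;> rcases y with a' | b' <;> simp_all).colorable
  exact h2.cliqueFree (by norm_num)

variable [Fintype α] [Fintype β] [∀ a b, Decidable (R a b)]

lemma degree_bipartiteOfRel_inl (a : α) :
    (bipartiteOfRel R).degree (.inl a) = #{b | R a b} := by
  have hN : (bipartiteOfRel R).neighborFinset (.inl a) = ({b | R a b} : Finset β).map .inr := by
    ext (a' | b) <;> simp
  rw [← card_neighborFinset_eq_degree, hN, card_map]

lemma degree_bipartiteOfRel_inr (b : β) :
    (bipartiteOfRel R).degree (.inr b) = #{a | R a b} := by
  have hN : (bipartiteOfRel R).neighborFinset (.inr b) = ({a | R a b} : Finset α).map .inl := by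
    ext (a | b') <;> simp
  rw [← card_neighborFinset_eq_degree, hN, card_map]

lemma card_edgeFinset_bipartiteOfRel :
    #(bipartiteOfRel R).edgeFinset = #{p : α × β | R p.1 p.2} := by
  have h := sum_degrees_eq_twice_card_edges (bipartiteOfRel R)
  simp only [Fintype.sum_sum_type, degree_bipartiteOfRel_inl, degree_bipartiteOfRel_inr,
    card_filter] at h
  rw [sum_comm (f := fun (b : β) (a : α) => if R a b then 1 else 0)] at h
  rw [card_filter, Fintype.sum_prod_type]
  dsimp only
  omega

end BipartiteOfRel

section CompleteBipartiteSup

variable {V : Type*} [Fintype V] [DecidableEq V]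

def completeBipartiteSup (P : Finset V) (J : SimpleGraph V) : SimpleGraph V :=
  (⊤ : SimpleGraph V).between P ↑Pᶜ ⊔ J

variable {P : Finset V} {J : SimpleGraph V}

instance [DecidableRel J.Adj] : DecidableRel (completeBipartiteSup P J).Adj :=
  inferInstanceAs (DecidableRel ((⊤ : SimpleGraph V).between P ↑Pᶜ ⊔ J).Adj)

lemma completeBipartiteSup_adj {u v : V} :
    (completeBipartiteSup P J).Adj u v ↔ (u ∈ P ↔ v ∉ P) ∨ J.Adj u v := by
  simp only [completeBipartiteSup, sup_adj, between_adj, top_adj, coe_compl, Set.mem_compl_iff,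
    Finset.mem_coe]
  refine or_congr_left ⟨fun h => by tauto, fun h => ⟨?_, by tauto⟩⟩
  rintro rfl
  tauto

lemma card_edgeFinset_completeBipartiteSup [DecidableRel J.Adj] (hJ : J.support ⊆ P) :
    #(completeBipartiteSup P J).edgeFinset = #P * #Pᶜ + #J.edgeFinset := by
  have hcut : ((⊤ : SimpleGraph V).between P ↑Pᶜ).IsBipartiteWith P ↑Pᶜ :=
    between_isBipartiteWith (by simpa using disjoint_compl_right)
  have hdisj : Disjoint ((⊤ : SimpleGraph V).between P ↑Pᶜ) J :=
    disjoint_left.2 fun u v h huv => by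
      have := hJ ⟨v, huv⟩; have := hJ ⟨u, huv.symm⟩
      simp_all [between_adj]
  have hsup : (completeBipartiteSup P J).edgeFinset =
      ((⊤ : SimpleGraph V).between P ↑Pᶜ).edgeFinset ∪ J.edgeFinset := by
    ext e
    rw [Finset.mem_union, mem_edgeFinset, mem_edgeFinset, mem_edgeFinset, completeBipartiteSup,
      edgeSet_sup, Set.mem_union]
  rw [hsup, card_union_of_disjoint (disjoint_edgeFinset.2 hdisj),
    ← isBipartiteWith_sum_degrees_eq_card_edges hcut, ← Finset.sum_const_nat]
  intro v hv
  rw [← card_neighborFinset_eq_degree, isBipartiteWith_neighborFinset hcut hv]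
  congr 1
  refine Finset.filter_true_of_mem fun w hw => ?_
  simp only [Finset.mem_compl, between_adj, top_adj, coe_compl, Set.mem_compl_iff,
    Finset.mem_coe] at hw ⊢
  exact ⟨fun h => hw (h ▸ hv), .inl ⟨hv, hw⟩⟩

lemma adj_of_completeBipartiteSup_adj {u v : V} (hu : u ∈ P) (hv : v ∈ P)
    (h : (completeBipartiteSup P J).Adj u v) : J.Adj u v := by
  simpa [completeBipartiteSup_adj, hu, hv] using h

lemma mem_of_completeBipartiteSup_adj_of_notMem (hJ : J.support ⊆ P) {u v : V} (hu : u ∉ P)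
    (h : (completeBipartiteSup P J).Adj u v) : v ∈ P := by
  rcases completeBipartiteSup_adj.1 h with h | h
  · tauto
  · exact absurd (hJ ⟨v, h⟩) hu

lemma exists_eq_ite_of_completeBipartiteSup_triangle (hJ : J.support ⊆ P)
    (hJ3 : J.CliqueFree 3) {c a b : V} (hc : c ∈ P) (hca : (completeBipartiteSup P J).Adj c a)
    (hcb : (completeBipartiteSup P J).Adj c b) (hab : (completeBipartiteSup P J).Adj a b) :
    ∃ x w : V, ∃ s : Bool, J.Adj c x ∧ w ∉ P ∧ (if s then (x, w) else (w, x)) = (a, b) := by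
  by_cases ha : a ∈ P
  · have hb : b ∉ P := fun hb => hJ3 {c, a, b} <| is3Clique_triple_iff.2
      ⟨adj_of_completeBipartiteSup_adj hc ha hca, adj_of_completeBipartiteSup_adj hc hb hcb,
        adj_of_completeBipartiteSup_adj ha hb hab⟩
    exact ⟨a, b, true, adj_of_completeBipartiteSup_adj hc ha hca, hb, rfl⟩
  · have hb : b ∈ P := mem_of_completeBipartiteSup_adj_of_notMem hJ ha hab
    exact ⟨b, a, false, adj_of_completeBipartiteSup_adj hc hb hcb, ha, rfl⟩

lemma natCard_isBowtie_completeBipartiteSup_le_of_mem [DecidableRel J.Adj] (hJ : J.support ⊆ P)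
    (hJ3 : J.CliqueFree 3) {c : V} (hc : c ∈ P) :
    Nat.card {p : (V × V) × (V × V) //
        IsBowtie (completeBipartiteSup P J) c p.1.1 p.1.2 p.2.1 p.2.2} ≤
      J.degree c * (J.degree c - 1) * (#Pᶜ * #Pᶜ * 4) := by
  classical
  let D := (J.neighborFinset c).offDiag ×ˢ ((Pᶜ ×ˢ Pᶜ) ×ˢ (univ : Finset (Bool × Bool)))
  let g : (V × V) × (V × V) × (Bool × Bool) → (V × V) × (V × V) :=
    fun ⟨(x₁, x₂), (w₁, w₂), (s₁, s₂)⟩ =>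
      (if s₁ then (x₁, w₁) else (w₁, x₁), if s₂ then (x₂, w₂) else (w₂, x₂))
  rw [Nat.card_eq_fintype_card, Fintype.card_subtype]
  calc _ ≤ #(D.image g) := by
        refine card_le_card fun ⟨(a, b), (d, e)⟩ hp => ?_
        obtain ⟨hca, hcb, hab, hcd, hce, hde, had, hae, hbd, hbe⟩ := (mem_filter.1 hp).2
        obtain ⟨x₁, w₁, s₁, hx₁, hw₁, h₁⟩ :=
          exists_eq_ite_of_completeBipartiteSup_triangle hJ hJ3 hc hca hcb hab
        obtain ⟨x₂, w₂, s₂, hx₂, hw₂, h₂⟩ :=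
          exists_eq_ite_of_completeBipartiteSup_triangle hJ hJ3 hc hcd hce hde
        refine mem_image.2 ⟨((x₁, x₂), (w₁, w₂), (s₁, s₂)), ?_, by simp only [g, h₁, h₂]⟩
        have hx : x₁ ≠ x₂ := by
          cases s₁ <;> cases s₂ <;> simp only [Bool.false_eq_true, ite_false, ite_true,
            Prod.mk.injEq] at h₁ h₂ <;> grind
        simp [D, hx₁, hx₂, hw₁, hw₂, hx]
    _ ≤ #D := card_image_le
    _ = _ := by
        simp only [D, card_product, offDiag_card, card_neighborFinset_eq_degree, card_univ,
          Fintype.card_prod, Fintype.card_bool, Nat.mul_sub_one]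

lemma natCard_isBowtie_completeBipartiteSup_le_of_notMem [DecidableRel J.Adj]
    (hJ : J.support ⊆ P) {c : V} (hc : c ∉ P) :
    Nat.card {p : (V × V) × (V × V) //
        IsBowtie (completeBipartiteSup P J) c p.1.1 p.1.2 p.2.1 p.2.2} ≤
      (2 * #J.edgeFinset) ^ 2 := by
  have hJadj {a b d e : V} (h : IsBowtie (completeBipartiteSup P J) c a b d e) :
      J.Adj a b ∧ J.Adj d e := by
    obtain ⟨hca, hcb, hab, hcd, hce, hde, -⟩ := h
    have hP {x} (hx : (completeBipartiteSup P J).Adj c x) :=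
      mem_of_completeBipartiteSup_adj_of_notMem hJ hc hx
    exact ⟨adj_of_completeBipartiteSup_adj (hP hca) (hP hcb) hab,
      adj_of_completeBipartiteSup_adj (hP hcd) (hP hce) hde⟩
  let f : {p : (V × V) × (V × V) //
      IsBowtie (completeBipartiteSup P J) c p.1.1 p.1.2 p.2.1 p.2.2} → J.Dart × J.Dart :=
    fun p => (⟨p.1.1, (hJadj p.2).1⟩, ⟨p.1.2, (hJadj p.2).2⟩)
  calc _ ≤ Nat.card (J.Dart × J.Dart) := Nat.card_le_card_of_injective f
        fun p q h => by simpa [f, Dart.ext_iff, Prod.ext_iff, Subtype.ext_iff] using h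
    _ = _ := by rw [Nat.card_prod, Nat.card_eq_fintype_card, dart_card_eq_twice_card_edges, sq]

lemma natCard_isBowtie_completeBipartiteSup_le [DecidableRel J.Adj] (hJ : J.support ⊆ P)
    (hJ3 : J.CliqueFree 3) :
    Nat.card {t : V × V × V × V × V //
        IsBowtie (completeBipartiteSup P J) t.1 t.2.1 t.2.2.1 t.2.2.2.1 t.2.2.2.2} ≤
      #Pᶜ * #Pᶜ * 4 * ∑ v, J.degree v * (J.degree v - 1) + #Pᶜ * (2 * #J.edgeFinset) ^ 2 := by
  rw [natCard_isBowtie_eq_sum, ← sum_add_sum_compl P]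
  calc _ ≤ ∑ c ∈ P, J.degree c * (J.degree c - 1) * (#Pᶜ * #Pᶜ * 4) +
        ∑ c ∈ Pᶜ, (2 * #J.edgeFinset) ^ 2 := by
        gcongr ?_ + ?_
        · exact sum_le_sum fun c hc => natCard_isBowtie_completeBipartiteSup_le_of_mem hJ hJ3 hc
        · exact sum_le_sum fun c hc =>
            natCard_isBowtie_completeBipartiteSup_le_of_notMem hJ (mem_compl.1 hc)
    _ ≤ _ := by
        rw [sum_const, smul_eq_mul, ← sum_mul, mul_comm]
        gcongr
        exact subset_univ P

end CompleteBipartiteSup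

end SimpleGraph

section Circulant

variable {m : ℕ} [NeZero m]

def circulantIndex : Fin m × Fin m ≃ Fin (m * m) :=
  (Equiv.mk (fun p => (p.2 - p.1, p.1)) (fun q => (q.2, q.1 + q.2)) (fun p => by simp)
    (fun q => by simp)).trans finProdFinEquiv

variable (m) in
/-- The first `k` cells of the grid `Fin m × Fin m` enumerated diagonal by diagonal (`j - i = 0`,
then `1`, …). Each diagonal is a perfect matching, so every row and every column meets at most
`⌈k/m⌉` of them. -/
def circulantRel (k : ℕ) (i j : Fin m) : Prop := (i : ℕ) + m * (j - i : Fin m) < k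

instance (k : ℕ) : DecidableRel (circulantRel m k) := fun _ _ => Nat.decLt _ _

lemma card_circulantRel {k : ℕ} (hk : k ≤ m * m) :
    #{p : Fin m × Fin m | circulantRel m k p.1 p.2} = k := by
  have h : ∀ p : Fin m × Fin m, circulantRel m k p.1 p.2 ↔ (circulantIndex p : ℕ) < k :=
    fun _ => Iff.rfl
  simp only [h]
  rw [← card_map circulantIndex.toEmbedding, map_filter, map_univ_equiv]
  simp only [Function.comp_def, Equiv.apply_symm_apply]
  rw [Fin.card_filter_val_lt, min_eq_right hk]

lemma card_filter_le_div_add_one_of_injective {k : ℕ} {f : Fin m → Fin m} (hf : f.Injective)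
    {p : Fin m → Prop} [DecidablePred p] (hp : ∀ x, p x → m * f x < k) :
    #{x | p x} ≤ (k - 1) / m + 1 := by
  rw [← card_range ((k - 1) / m + 1)]
  refine card_le_card_of_injOn (fun x => (f x : ℕ)) (fun x hx => ?_)
    (fun x _ y _ h => hf (Fin.ext h))
  have hx' := hp x (mem_filter.1 hx).2
  simp only [coe_range, Set.mem_Iio, Nat.lt_succ_iff]
  rw [Nat.le_div_iff_mul_le (NeZero.pos m), mul_comm]
  omega

lemma card_circulantRel_row_le (k : ℕ) (i : Fin m) :
    #{j | circulantRel m k i j} ≤ (k - 1) / m + 1 :=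
  card_filter_le_div_add_one_of_injective (sub_left_injective (b := i))
    fun j (hj : _ < k) => by omega

lemma card_circulantRel_col_le (k : ℕ) (j : Fin m) :
    #{i | circulantRel m k i j} ≤ (k - 1) / m + 1 :=
  card_filter_le_div_add_one_of_injective (sub_right_injective (b := j))
    fun i (hi : _ < k) => by omega

end Circulant

theorem exists_edgeCount_eq_natCard_isBowtie_le {V : Type*} [Fintype V] [DecidableEq V]
    (P : Finset V) {m k : ℕ} [NeZero m] (hm : 2 * m ≤ #P) (hk : k ≤ m * m) :
    ∃ G : SimpleGraph V, edgeCount G = #P * #Pᶜ + k ∧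
      Nat.card {t : V × V × V × V × V // IsBowtie G t.1 t.2.1 t.2.2.1 t.2.2.2.1 t.2.2.2.2} ≤
        #Pᶜ * #Pᶜ * 4 * (2 * k * ((k - 1) / m)) + #Pᶜ * (2 * k) ^ 2 := by
  classical
  obtain ⟨φ⟩ : Nonempty (Fin m ⊕ Fin m ↪ P) :=
    Function.Embedding.nonempty_of_card_le (by simpa [two_mul] using hm)
  let ψ := φ.trans (Function.Embedding.subtype _)
  let J := (bipartiteOfRel (circulantRel m k)).map ψ
  have hJ : J.support ⊆ P := by
    rintro _ ⟨_, -, x, -, -, rfl, -⟩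
    exact (φ x).2
  have hJ3 : J.CliqueFree 3 := cliqueFree_map_iff.2 cliqueFree_three_bipartiteOfRel
  have hJe : #J.edgeFinset = k := by
    rw [card_edgeFinset_map, card_edgeFinset_bipartiteOfRel, card_circulantRel hk]
  have hJdeg : ∀ v, J.degree v ≤ (k - 1) / m + 1 := degree_map_le_of_forall_degree_le ψ <| by
    rintro (i | j)
    · rw [degree_bipartiteOfRel_inl]; exact card_circulantRel_row_le k i
    · rw [degree_bipartiteOfRel_inr]; exact card_circulantRel_col_le k j
  refine ⟨completeBipartiteSup P J, ?_, ?_⟩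
  · rw [edgeCount_eq_card_edgeFinset, card_edgeFinset_completeBipartiteSup hJ, hJe]
  · calc _ ≤ _ := natCard_isBowtie_completeBipartiteSup_le hJ hJ3
      _ ≤ #Pᶜ * #Pᶜ * 4 * (2 * #J.edgeFinset * ((k - 1) / m)) +
          #Pᶜ * (2 * #J.edgeFinset) ^ 2 := by
        gcongr
        exact sum_degree_mul_pred_le hJdeg
      _ = _ := by rw [hJe]

lemma tuple_bound_le {n k : ℕ} (hn : 8 ≤ n) :
    (n - n / 2) * (n - n / 2) * 4 * (2 * k * ((k - 1) / (n / 4))) + (n - n / 2) * (2 * k) ^ 2 ≤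
      k ^ 2 * (26 * n + 104) := by
  set X := n - n / 2
  set m := n / 4
  have hX : 2 * X ≤ n + 1 := by omega
  have hm : n ≤ 4 * m + 3 := by omega
  have hm0 : 0 < m := by omega
  have hD : m * ((k - 1) / m) ≤ k := (Nat.mul_div_le _ _).trans (Nat.sub_le _ _)
  have hXm : 8 * X ^ 2 + 4 * X * m ≤ (26 * n + 104) * m := by nlinarith
  refine Nat.le_of_mul_le_mul_left ?_ hm0
  calc m * (X * X * 4 * (2 * k * ((k - 1) / m)) + X * (2 * k) ^ 2)
      = 8 * X ^ 2 * k * (m * ((k - 1) / m)) + 4 * X * m * k ^ 2 := by ring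
    _ ≤ 8 * X ^ 2 * k * k + 4 * X * m * k ^ 2 := by gcongr
    _ = k ^ 2 * (8 * X ^ 2 + 4 * X * m) := by ring
    _ ≤ k ^ 2 * ((26 * n + 104) * m) := by gcongr
    _ = m * (k ^ 2 * (26 * n + 104)) := by ring

lemma succ_le_div_four_mul_self {n q : ℕ} (hn : 32 ≤ n) (hq : 20 * q ≤ n ^ 2) :
    q + 1 ≤ n / 4 * (n / 4) := by
  have hm : n ≤ 4 * (n / 4) + 3 := by omega
  have hm8 : 8 ≤ n / 4 := by omega
  nlinarith

lemma div_two_mul_sub_div_two (n : ℕ) : n / 2 * (n - n / 2) = n ^ 2 / 4 := by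
  obtain ⟨t, rfl | rfl⟩ := Nat.even_or_odd' n
  · rw [show 2 * t / 2 = t by omega, show 2 * t - t = t by omega,
      show (2 * t) ^ 2 = t * t * 4 by ring, Nat.mul_div_cancel _ (by norm_num)]
  · rw [show (2 * t + 1) / 2 = t by omega, show 2 * t + 1 - t = t + 1 by omega,
      show (2 * t + 1) ^ 2 = 1 + t * (t + 1) * 4 by ring, Nat.add_mul_div_right _ _ (by norm_num)]
    simp

theorem upper_bound_hF :
    ∃ N : ℕ, ∀ n : ℕ, N ≤ n → ∀ q : ℕ, (q : ℚ) ≤ n ^ 2 / 20 →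
      (∃ H : SimpleGraph (Fin n), edgeCount H = n ^ 2 / 4 + 1 + q ∧
        (bowtieCount H : ℚ) ≤ (q + 1) ^ 2 * (13 * n / 4 + 13)) ∧
      (hF n q : ℚ) ≤ (q + 1) ^ 2 * (13 * n / 4 + 13) := by
  refine ⟨32, fun n hn q hq => ?_⟩
  have hq' : 20 * q ≤ n ^ 2 := by exact_mod_cast (by linarith : (20 * q : ℚ) ≤ n ^ 2)
  have : NeZero (n / 4) := ⟨by omega⟩
  let P : Finset (Fin n) := {v | (v : ℕ) < n / 2}
  have hP : #P = n / 2 := by rw [Fin.card_filter_val_lt, min_eq_right (Nat.div_le_self n 2)]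
  have hPc : #Pᶜ = n - n / 2 := by rw [card_compl, Fintype.card_fin, hP]
  obtain ⟨H, hE, hB⟩ := exists_edgeCount_eq_natCard_isBowtie_le P
    (m := n / 4) (k := q + 1) (by omega) (succ_le_div_four_mul_self hn hq')
  rw [hP, hPc, div_two_mul_sub_div_two] at hE
  rw [hPc] at hB
  have hE' : edgeCount H = n ^ 2 / 4 + 1 + q := by omega
  have hB' : (bowtieCount H : ℚ) ≤ (q + 1) ^ 2 * (13 * n / 4 + 13) := by
    have hT := hB.trans (tuple_bound_le (by omega))
    calc (bowtieCount H : ℚ) ≤ _ / 8 := Nat.cast_div_le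
      _ ≤ ((q + 1) ^ 2 * (26 * n + 104) : ℕ) / 8 := by gcongr
      _ = _ := by push_cast; ring
  have hHF : hF n q ≤ bowtieCount H := Nat.sInf_le ⟨H, hE', rfl⟩
  exact ⟨⟨H, hE', hB'⟩, (Nat.cast_le.2 hHF).trans hB'⟩
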